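/- Let V be a bounded operator on H. (i) For every nonzero complex number λ, V restricts to a linear isomorphism from ker(V†V − λ·I) onto ker(V V† − λ·I). (ii) If V is Hilbert–Schmidt and 0 < λ ≤ 1, then the eigenspaces ker(V V† − λ·I) and ker(Vᵀ V̄ − λ·I) are finite-dimensional and have equal dimension. -/

import Mathlib

open scoped InnerProductSpace
open ContinuousLinearMap

variable {H : Type*} [NormedAddCommGroup H] [InnerProductSpace ℂ H] [CompleteSpace H]

/-- `V` is a Hilbert–Schmidt operator: `∑ᵢ ‖V eᵢ‖² < ∞` for some Hilbert basis `(eᵢ)`. -/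
def IsHilbertSchmidt (V : H →L[ℂ] H) : Prop :=
  ∃ (ι : Type) (e : HilbertBasis ι ℂ H), Summable fun i => ‖V (e i)‖ ^ 2

/-! (i) If `V†V x = μ x` then `VV† (V x) = μ V x`, and `μ⁻¹ V†` inverts `V` between these
eigenspaces. (ii) On `ker (VV† − λ)` one has `‖V† x‖² = λ ‖x‖²`, while `∑ₖ ‖V† fₖ‖²` is bounded
by the Hilbert–Schmidt norm `∑ᵢ ‖V eᵢ‖²` for every orthonormal family `(fₖ)`; an infinite
orthonormal family in the eigenspace would make the left side infinite. Finally
`VᵀV̄ = J V†V J` and `λ` is real, so `J` maps `ker (VᵀV̄ − λ)` conjugate-linearly onto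
`ker (V†V − λ)`, which is isomorphic to `ker (VV† − λ)` by (i). -/

universe u

section Kernels

variable {𝕜 E F : Type*} [Field 𝕜]
  [AddCommGroup E] [Module 𝕜 E] [TopologicalSpace E] [IsTopologicalAddGroup E]
  [ContinuousConstSMul 𝕜 E]
  [AddCommGroup F] [Module 𝕜 F] [TopologicalSpace F] [IsTopologicalAddGroup F]
  [ContinuousConstSMul 𝕜 F]

theorem mem_ker_sub_smul_one_iff (T : E →L[𝕜] E) (μ : 𝕜) (x : E) :
    x ∈ LinearMap.ker ((T - μ • (1 : E →L[𝕜] E) : E →L[𝕜] E) : E →ₗ[𝕜] E) ↔ T x = μ • x := by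
  simp [sub_eq_zero]

theorem bijOn_ker_comp_sub_smul_one (V : E →L[𝕜] F) (W : F →L[𝕜] E) {μ : 𝕜} (hμ : μ ≠ 0) :
    Set.BijOn V (LinearMap.ker ((W ∘L V - μ • (1 : E →L[𝕜] E) : E →L[𝕜] E) : E →ₗ[𝕜] E))
      (LinearMap.ker ((V ∘L W - μ • (1 : F →L[𝕜] F) : F →L[𝕜] F) : F →ₗ[𝕜] F)) := by
  simp only [SetLike.mem_coe, Set.BijOn, Set.MapsTo, Set.InjOn, Set.SurjOn, Set.subset_def,
    Set.mem_image, mem_ker_sub_smul_one_iff, comp_apply]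
  refine ⟨fun x hx => by rw [hx, map_smul], fun x hx y hy hxy => ?_, fun y hy => ?_⟩
  · have h := congrArg W hxy
    rw [hx, hy] at h
    exact smul_right_injective E hμ h
  · refine ⟨μ⁻¹ • W y, ?_, ?_⟩
    · rw [map_smul, map_smul, hy, map_smul, smul_comm]
    · rw [map_smul, hy, inv_smul_smul₀ hμ]

end Kernels

theorem LinearMap.rank_eq_of_bijOn {R : Type*} {M N : Type u} [Ring R] [AddCommGroup M]
    [Module R M] [AddCommGroup N] [Module R N] (f : M →ₗ[R] N) {p : Submodule R M}
    {q : Submodule R N}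
    (h : Set.BijOn f p q) : Module.rank R p = Module.rank R q :=
  (LinearEquiv.ofBijective (f.restrict h.mapsTo) h.bijective).rank_eq

section HilbertSchmidt

variable {𝕜 E F ι κ : Type*} [RCLike 𝕜] [NormedAddCommGroup E] [InnerProductSpace 𝕜 E]
  [NormedAddCommGroup F] [InnerProductSpace 𝕜 F]

theorem HilbertBasis.hasSum_norm_inner_sq (b : HilbertBasis ι 𝕜 E) (x : E) :
    HasSum (fun i => ‖⟪b i, x⟫_𝕜‖ ^ 2) (‖x‖ ^ 2) := by
  have h := (b.hasSum_inner_mul_inner x x).mapL (RCLike.reCLM (K := 𝕜))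
  simp only [RCLike.reCLM_apply, ← inner_conj_symm x (b _), RCLike.conj_mul] at h
  simpa only [← RCLike.ofReal_pow, RCLike.ofReal_re, inner_self_eq_norm_sq] using h

theorem exists_orthonormal_nat_of_not_finiteDimensional (h : ¬FiniteDimensional 𝕜 E) :
    ∃ f : ℕ → E, Orthonormal 𝕜 f := by
  obtain ⟨v, -, hv, hmax⟩ := exists_maximal_orthonormal (orthonormal_empty 𝕜 E)
  have : Infinite v := by
    by_contra hfin
    have hv_fin : v.Finite := not_infinite_iff_finite.mp hfin
    have := FiniteDimensional.span_of_finite 𝕜 hv_fin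
    rw [maximal_orthonormal_iff_orthogonalComplement_eq_bot hv,
      Submodule.orthogonal_eq_bot_iff] at hmax
    exact h ⟨hmax ▸ Submodule.fg_span hv_fin⟩
  exact ⟨_, hv.comp _ (Infinite.natEmbedding v).injective⟩

theorem Orthonormal.tsum_ofReal_norm_inner_sq_le {f : κ → E} (hf : Orthonormal 𝕜 f) (x : E) :
    ∑' k, ENNReal.ofReal (‖⟪f k, x⟫_𝕜‖ ^ 2) ≤ ENNReal.ofReal (‖x‖ ^ 2) := by
  rw [← ENNReal.ofReal_tsum_of_nonneg (fun _ => by positivity) (hf.inner_products_summable x)]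
  exact ENNReal.ofReal_le_ofReal (hf.tsum_inner_products_le x)

variable [CompleteSpace E] [CompleteSpace F]

/-- Expanding `‖V† fₖ‖²` in the basis `b` and `‖V bᵢ‖²` against the family `f` (Parseval and
Bessel) writes both sides as sums of the same terms `|⟪V bᵢ, fₖ⟫|²`. -/
theorem tsum_ofReal_norm_adjoint_sq_le (V : E →L[𝕜] F) (b : HilbertBasis ι 𝕜 E) {f : κ → F}
    (hf : Orthonormal 𝕜 f) :
    ∑' k, ENNReal.ofReal (‖adjoint V (f k)‖ ^ 2) ≤ ∑' i, ENNReal.ofReal (‖V (b i)‖ ^ 2) :=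
  calc ∑' k, ENNReal.ofReal (‖adjoint V (f k)‖ ^ 2)
      = ∑' k, ∑' i, ENNReal.ofReal (‖⟪V (b i), f k⟫_𝕜‖ ^ 2) := by
        refine tsum_congr fun k => ?_
        have hP := b.hasSum_norm_inner_sq (adjoint V (f k))
        rw [← hP.tsum_eq, ENNReal.ofReal_tsum_of_nonneg (fun _ => by positivity) hP.summable]
        simp only [adjoint_inner_right]
    _ = ∑' i, ∑' k, ENNReal.ofReal (‖⟪V (b i), f k⟫_𝕜‖ ^ 2) := ENNReal.tsum_comm
    _ ≤ ∑' i, ENNReal.ofReal (‖V (b i)‖ ^ 2) := ENNReal.tsum_le_tsum fun i =>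
        (tsum_congr fun k => by rw [norm_inner_symm]).trans_le (hf.tsum_ofReal_norm_inner_sq_le _)

theorem finiteDimensional_of_mul_norm_sq_le_norm_adjoint_sq (V : E →L[𝕜] F)
    (b : HilbertBasis ι 𝕜 E) (hV : Summable fun i => ‖V (b i)‖ ^ 2) {c : ℝ} (hc : 0 < c)
    (K : Submodule 𝕜 F) (hK : ∀ x ∈ K, c * ‖x‖ ^ 2 ≤ ‖adjoint V x‖ ^ 2) :
    FiniteDimensional 𝕜 K := by
  by_contra hK_inf
  obtain ⟨f, hf⟩ := exists_orthonormal_nat_of_not_finiteDimensional hK_inf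
  have hf' : Orthonormal 𝕜 fun n => (f n : F) := hf.comp_linearIsometry K.subtypeₗᵢ
  have hc_le : ∀ n, ENNReal.ofReal c ≤ ENNReal.ofReal (‖adjoint V (f n)‖ ^ 2) := fun n => by
    simpa [hf'.1 n] using ENNReal.ofReal_le_ofReal (hK _ (f n).2)
  refine ENNReal.ofReal_ne_top (r := ∑' i, ‖V (b i)‖ ^ 2) (top_unique ?_)
  calc ⊤ = ∑' _ : ℕ, ENNReal.ofReal c := (ENNReal.tsum_const_eq_top_of_ne_zero (by simpa)).symm
    _ ≤ ∑' n, ENNReal.ofReal (‖adjoint V (f n)‖ ^ 2) := ENNReal.tsum_le_tsum hc_le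
    _ ≤ ∑' i, ENNReal.ofReal (‖V (b i)‖ ^ 2) := tsum_ofReal_norm_adjoint_sq_le V b hf'
    _ = ENNReal.ofReal (∑' i, ‖V (b i)‖ ^ 2) :=
        (ENNReal.ofReal_tsum_of_nonneg (fun _ => by positivity) hV).symm

theorem norm_adjoint_sq_of_mem_ker (V : E →L[𝕜] F) (r : ℝ) {x : F}
    (hx : x ∈ LinearMap.ker
      ((V ∘L adjoint V - (r : 𝕜) • (1 : F →L[𝕜] F) : F →L[𝕜] F) : F →ₗ[𝕜] F)) :
    ‖adjoint V x‖ ^ 2 = r * ‖x‖ ^ 2 := by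
  rw [mem_ker_sub_smul_one_iff, comp_apply] at hx
  have h := congrArg RCLike.re (adjoint_inner_left V (adjoint V x) x)
  rwa [hx, inner_smul_right, RCLike.re_ofReal_mul, inner_self_eq_norm_sq,
    inner_self_eq_norm_sq] at h

end HilbertSchmidt

theorem IsHilbertSchmidt.finiteDimensional_ker_comp_adjoint_sub {V : H →L[ℂ] H}
    (hV : IsHilbertSchmidt V) {r : ℝ} (hr : 0 < r) :
    FiniteDimensional ℂ
      (LinearMap.ker ((V ∘L adjoint V - (r : ℂ) • (1 : H →L[ℂ] H) : H →L[ℂ] H) : H →ₗ[ℂ] H)) := by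
  obtain ⟨ι, b, hb⟩ := hV
  exact finiteDimensional_of_mul_norm_sq_le_norm_adjoint_sq V b hb hr _
    fun x hx => (norm_adjoint_sq_of_mem_ker V r hx).ge

theorem rank_ker_sub_smul_one_eq_of_conj {E : Type*} [NormedAddCommGroup E] [NormedSpace ℂ E]
    (J : E → E) (hJ_add : ∀ f g, J (f + g) = J f + J g)
    (hJ_smul : ∀ (c : ℂ) (f : E), J (c • f) = (starRingEnd ℂ) c • J f)
    (hJ_invol : ∀ f, J (J f) = f) (A B : E →L[ℂ] E) (hB : ∀ x, B x = J (A (J x))) (r : ℝ) :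
    Module.rank ℂ (LinearMap.ker ((B - (r : ℂ) • (1 : E →L[ℂ] E) : E →L[ℂ] E) : E →ₗ[ℂ] E)) =
      Module.rank ℂ (LinearMap.ker ((A - (r : ℂ) • (1 : E →L[ℂ] E) : E →L[ℂ] E) : E →ₗ[ℂ] E)) := by
  have hJ_real (x : E) : J ((r : ℂ) • x) = (r : ℂ) • J x := by rw [hJ_smul, Complex.conj_ofReal]
  have hmem (x : E) : B x = (r : ℂ) • x ↔ A (J x) = (r : ℂ) • J x := by
    rw [hB, ← (Function.Involutive.injective hJ_invol).eq_iff, hJ_invol, hJ_real]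
  let j : LinearMap.ker ((B - (r : ℂ) • (1 : E →L[ℂ] E) : E →L[ℂ] E) : E →ₗ[ℂ] E) ≃+
      LinearMap.ker ((A - (r : ℂ) • (1 : E →L[ℂ] E) : E →L[ℂ] E) : E →ₗ[ℂ] E) :=
    { toFun := fun x => ⟨J x, (mem_ker_sub_smul_one_iff _ _ _).2
        ((hmem x).1 ((mem_ker_sub_smul_one_iff _ _ _).1 x.2))⟩
      invFun := fun y => ⟨J y, (mem_ker_sub_smul_one_iff _ _ _).2
        ((hmem (J y)).2 (by rw [hJ_invol]; exact (mem_ker_sub_smul_one_iff _ _ _).1 y.2))⟩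
      left_inv := fun x => Subtype.ext (hJ_invol x)
      right_inv := fun y => Subtype.ext (hJ_invol y)
      map_add' := fun x y => Subtype.ext (hJ_add x y) }
  exact rank_eq_of_equiv_equiv (starRingEnd ℂ) j (Function.Involutive.bijective Complex.conj_conj)
    fun c x => Subtype.ext (hJ_smul c x)

theorem eigenspace_dims_general
    -- the antiunitary involution `f ↦ f* = J f`
    (J : H → H)
    (hJ_add : ∀ f g, J (f + g) = J f + J g)
    (hJ_smul : ∀ (c : ℂ) (f : H), J (c • f) = (starRingEnd ℂ) c • J f)
    (hJ_invol : ∀ f, J (J f) = f)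
    (V Vbar Vt : H →L[ℂ] H)
    (hVbar : ∀ f, Vbar f = J (V (J f)))
    (hVt : ∀ f, Vt f = J (adjoint V (J f))) :
    (∀ μ : ℂ, μ ≠ 0 →
      Set.BijOn V (LinearMap.ker ((adjoint V ∘L V - μ • (1 : H →L[ℂ] H) : H →L[ℂ] H) : H →ₗ[ℂ] H) : Set H)
        (LinearMap.ker ((V ∘L adjoint V - μ • (1 : H →L[ℂ] H) : H →L[ℂ] H) : H →ₗ[ℂ] H) : Set H)) ∧
    (IsHilbertSchmidt V → ∀ lam : ℝ, 0 < lam → lam ≤ 1 →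
      FiniteDimensional ℂ (LinearMap.ker ((V ∘L adjoint V - (lam : ℂ) • (1 : H →L[ℂ] H) : H →L[ℂ] H) : H →ₗ[ℂ] H)) ∧
      FiniteDimensional ℂ (LinearMap.ker ((Vt ∘L Vbar - (lam : ℂ) • (1 : H →L[ℂ] H) : H →L[ℂ] H) : H →ₗ[ℂ] H)) ∧
      Module.finrank ℂ (LinearMap.ker ((V ∘L adjoint V - (lam : ℂ) • (1 : H →L[ℂ] H) : H →L[ℂ] H) : H →ₗ[ℂ] H)) =
        Module.finrank ℂ (LinearMap.ker ((Vt ∘L Vbar - (lam : ℂ) • (1 : H →L[ℂ] H) : H →L[ℂ] H) : H →ₗ[ℂ] H))) := by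
  refine ⟨fun μ hμ => bijOn_ker_comp_sub_smul_one V (adjoint V) hμ, ?_⟩
  rintro hV lam hlam -
  have hbij := bijOn_ker_comp_sub_smul_one V (adjoint V) (Complex.ofReal_ne_zero.mpr hlam.ne')
  have hrank : Module.rank ℂ (LinearMap.ker
        ((Vt ∘L Vbar - (lam : ℂ) • (1 : H →L[ℂ] H) : H →L[ℂ] H) : H →ₗ[ℂ] H)) =
      Module.rank ℂ (LinearMap.ker
        ((V ∘L adjoint V - (lam : ℂ) • (1 : H →L[ℂ] H) : H →L[ℂ] H) : H →ₗ[ℂ] H)) := by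
    rw [rank_ker_sub_smul_one_eq_of_conj J hJ_add hJ_smul hJ_invol (adjoint V ∘L V) _
      (fun x => by simp only [comp_apply, hVbar, hVt, hJ_invol]) lam]
    exact (V : H →ₗ[ℂ] H).rank_eq_of_bijOn hbij
  have hfin := hV.finiteDimensional_ker_comp_adjoint_sub hlam
  exact ⟨hfin, Module.rank_lt_aleph0_iff.mp (hrank ▸ Module.rank_lt_aleph0 ℂ _),
    congrArg Cardinal.toNat hrank.symm⟩

/-- (i) For `μ ≠ 0`, `V` restricts to a (linear) bijection from
`ker (V†V − μ)` onto `ker (VV† − μ)`.  (ii) If `V` is Hilbert–Schmidt and `0 < λ ≤ 1`,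
the eigenspaces `ker (VV† − λ)` and `ker (VᵀV̄ − λ)` are finite-dimensional of the same
dimension. -/
theorem eigenspace_dims
    [TopologicalSpace.SeparableSpace H]
    -- the antiunitary involution `f ↦ f* = J f`
    (J : H → H)
    (hJ_add : ∀ f g, J (f + g) = J f + J g)
    (hJ_smul : ∀ (c : ℂ) (f : H), J (c • f) = (starRingEnd ℂ) c • J f)
    (hJ_invol : ∀ f, J (J f) = f)
    (hJ_inner : ∀ f g : H, ⟪J f, J g⟫_ℂ = ⟪g, f⟫_ℂ)
    (V Vbar Vt : H →L[ℂ] H)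
    (hVbar : ∀ f, Vbar f = J (V (J f)))
    (hVt : ∀ f, Vt f = J (adjoint V (J f))) :
    (∀ μ : ℂ, μ ≠ 0 →
      Set.BijOn V (LinearMap.ker ((adjoint V ∘L V - μ • (1 : H →L[ℂ] H) : H →L[ℂ] H) : H →ₗ[ℂ] H) : Set H)
        (LinearMap.ker ((V ∘L adjoint V - μ • (1 : H →L[ℂ] H) : H →L[ℂ] H) : H →ₗ[ℂ] H) : Set H)) ∧
    (IsHilbertSchmidt V → ∀ lam : ℝ, 0 < lam → lam ≤ 1 →
      FiniteDimensional ℂ (LinearMap.ker ((V ∘L adjoint V - (lam : ℂ) • (1 : H →L[ℂ] H) : H →L[ℂ] H) : H →ₗ[ℂ] H)) ∧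
      FiniteDimensional ℂ (LinearMap.ker ((Vt ∘L Vbar - (lam : ℂ) • (1 : H →L[ℂ] H) : H →L[ℂ] H) : H →ₗ[ℂ] H)) ∧
      Module.finrank ℂ (LinearMap.ker ((V ∘L adjoint V - (lam : ℂ) • (1 : H →L[ℂ] H) : H →L[ℂ] H) : H →ₗ[ℂ] H)) =
        Module.finrank ℂ (LinearMap.ker ((Vt ∘L Vbar - (lam : ℂ) • (1 : H →L[ℂ] H) : H →L[ℂ] H) : H →ₗ[ℂ] H))) :=
  eigenspace_dims_general J hJ_add hJ_smul hJ_invol V Vbar Vt hVbar hVt
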